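/- arXiv:1003.0852 — 3 statements merged into one kernel-verified Lean document; each statement's English description precedes it below -/
import Mathlib

section
/- Three-term formula relating the Dirac-modified polynomials to the original ones: under the stated setup, suppose additionally that {V_m}, {G_m} satisfy the recurrences z V_m(z) = A_m V_{m+1}(z) + B_m V_m(z) + C_m V_{m-1}(z) and z G_m(z) = G_{m-1}(z)A_{m-1} + G_m(z)B_m + G_{m+1}(z)C_{m+1} (m ≥ 0, V_{-1} = G_{-1} = 0, V_0 = I). Then for every m ≥ 0 and all z ∈ ℂ: z·Ṽ_m(z) = α¹_{m+1} V_{m+1}(z) + α²_m V_m(z) + α³_{m-1} V_{m-1}(z), where α¹_{m+1} = D_m A_m − L_m G_m(0) A_m, α²_m = D_m B_m + L_m G_{m+1}(0) C_{m+1}, α³_{m-1} = D_m C_m, with L_m = D_m V_m(0) [ I + δ(P_0)Λ^T K_{m+1}(c_l,c_l) ]^{-1} δ(P_0)Λ^T, D_m = Δ̃_m β_m^m (Δ̃_m = (h^m Ũ)(B̃_m), β_m^m the leading coefficient of G_m), and c_l any zero of h. -/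
open Polynomial Matrix Finset

noncomputable section

/-- `N × N` matrices with polynomial entries, viewed as matrix polynomials. -/
abbrev MatPoly (N : ℕ) := Matrix (Fin N) (Fin N) (Polynomial ℂ)

/-- Evaluation of a matrix polynomial at a complex number (entrywise evaluation). -/
def evalM {N : ℕ} (Q : MatPoly N) (z : ℂ) : Matrix (Fin N) (Fin N) ℂ :=
  Q.map (Polynomial.eval z)

/-- Composition of a matrix polynomial with a scalar polynomial `h` (entrywise). -/
def compH {N : ℕ} (Q : MatPoly N) (h : Polynomial ℂ) : MatPoly N :=
  Q.map fun p => p.comp h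

/-- The vector polynomial `P₀(x) = [1, x, …, x^{N-1}]ᵀ`. -/
def P0 (N : ℕ) : Fin N → Polynomial ℂ := fun i => Polynomial.X ^ (i : ℕ)

/-- Action of a vector of linear functionals `U` on a vector polynomial `P`:
the matrix with `(i,j)` entry `u^j(p_i)`. -/
def applyU {N : ℕ} (U : Fin N → (Polynomial ℂ →ₗ[ℂ] ℂ)) (P : Fin N → Polynomial ℂ) :
    Matrix (Fin N) (Fin N) ℂ := Matrix.of fun i j => U j (P i)

/-- The vector polynomial `B(x) = V(h(x)) P₀(x)` associated to a matrix polynomial `V`. -/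
def Bvec {N : ℕ} (V : MatPoly N) (h : Polynomial ℂ) : Fin N → Polynomial ℂ :=
  (compH V h).mulVec (P0 N)

/-- `((Qᵀ U)(P))_{i,j} = Σ_s u^s (Q_{s,j} p_i)`. -/
def transApply {N : ℕ} (U : Fin N → (Polynomial ℂ →ₗ[ℂ] ℂ)) (Q : MatPoly N)
    (P : Fin N → Polynomial ℂ) : Matrix (Fin N) (Fin N) ℂ :=
  Matrix.of fun i j => ∑ s, U s (Q s j * P i)

/-- The linear functional `p ↦ p⁽ⁱ⁾(c)` (the `i`-th derivative evaluated at `c`). -/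
def dd (c : ℂ) (i : ℕ) : Polynomial ℂ →ₗ[ℂ] ℂ :=
  (Polynomial.leval c).comp
    ((Polynomial.derivative : Polynomial ℂ →ₗ[ℂ] Polynomial ℂ) ^ i)

/-- The components of the Dirac delta vector functional associated with the points `c j`
and multiplicities `Mu j + 1`, via an identification `e` of `Fin N` with the pairs
`(j, i)`, `0 ≤ i ≤ Mu j`. -/
def deltaVec {N M : ℕ} (c : Fin M → ℂ) (Mu : Fin M → ℕ)
    (e : Fin N ≃ (Σ j : Fin M, Fin (Mu j + 1))) : Fin N → (Polynomial ℂ →ₗ[ℂ] ℂ) :=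
  fun s => dd (c (e s).1) ((e s).2 : ℕ)

/-- `δ(P)`: the matrix with `(r,s)` entry the `s`-th component of `δ` applied to `p_r`. -/
def deltaMat {N M : ℕ} (c : Fin M → ℂ) (Mu : Fin M → ℕ)
    (e : Fin N ≃ (Σ j : Fin M, Fin (Mu j + 1))) (P : Fin N → Polynomial ℂ) :
    Matrix (Fin N) (Fin N) ℂ :=
  Matrix.of fun r s => deltaVec c Mu e s (P r)

/-- The modified functional `Ũ = U + Λδ` acting on a vector polynomial:
`Ũ(P) = U(P) + δ(P) Λᵀ`. -/
def applyUt {N M : ℕ} (U : Fin N → (Polynomial ℂ →ₗ[ℂ] ℂ))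
    (Λ : Matrix (Fin N) (Fin N) ℂ) (c : Fin M → ℂ) (Mu : Fin M → ℕ)
    (e : Fin N ≃ (Σ j : Fin M, Fin (Mu j + 1))) (P : Fin N → Polynomial ℂ) :
    Matrix (Fin N) (Fin N) ℂ :=
  applyU U P + deltaMat c Mu e P * Λ.transpose

/-- The coefficient of degree `m` of a matrix polynomial (its "leading coefficient"
when it has degree `m`). -/
def leadC {N : ℕ} (Q : MatPoly N) (m : ℕ) : Matrix (Fin N) (Fin N) ℂ :=
  Matrix.of fun i j => (Q i j).coeff m

/-- `K_{m+1}(c_l, c_l) = Σ_{j=0}^m G_j(0) V_j(0)` (independent of the zero `c_l` of `h`,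
since `h(c_l) = 0`). -/
def Kzero {N : ℕ} (V G : ℕ → MatPoly N) (m : ℕ) : Matrix (Fin N) (Fin N) ℂ :=
  ∑ j ∈ Finset.range (m + 1), evalM (G j) 0 * evalM (V j) 0

/-- `D_m = Δ̃_m β_m^m`, where `Δ̃_m = (h^m Ũ)(B̃_m)` and `β_m^m` is the leading
coefficient of `G_m`. -/
def Dmat {N M : ℕ} (U : Fin N → (Polynomial ℂ →ₗ[ℂ] ℂ))
    (Λ : Matrix (Fin N) (Fin N) ℂ) (c : Fin M → ℂ) (Mu : Fin M → ℕ)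
    (e : Fin N ≃ (Σ j : Fin M, Fin (Mu j + 1))) (h : Polynomial ℂ)
    (G Vt : ℕ → MatPoly N) (m : ℕ) : Matrix (Fin N) (Fin N) ℂ :=
  (applyUt U Λ c Mu e fun i => h ^ m * Bvec (Vt m) h i) * leadC (G m) m

/-- `L_m = D_m V_m(0) (I + δ(P₀) Λᵀ K_{m+1}(c_l,c_l))⁻¹ δ(P₀) Λᵀ`. -/
def Lmat {N M : ℕ} (U : Fin N → (Polynomial ℂ →ₗ[ℂ] ℂ))
    (Λ : Matrix (Fin N) (Fin N) ℂ) (c : Fin M → ℂ) (Mu : Fin M → ℕ)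
    (e : Fin N ≃ (Σ j : Fin M, Fin (Mu j + 1))) (h : Polynomial ℂ)
    (V G Vt : ℕ → MatPoly N) (m : ℕ) : Matrix (Fin N) (Fin N) ℂ :=
  Dmat U Λ c Mu e h G Vt m * evalM (V m) 0 *
      ((1 : Matrix (Fin N) (Fin N) ℂ) +
        deltaMat c Mu e (P0 N) * Λ.transpose * Kzero V G m)⁻¹ *
    deltaMat c Mu e (P0 N) * Λ.transpose

section Lemmas

lemma derivative_dvd_aux (c : ℂ) (n : ℕ) (p : Polynomial ℂ)
    (hp : (X - Polynomial.C c) ^ (n + 1) ∣ p) :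
    (X - Polynomial.C c) ^ n ∣ Polynomial.derivative p := by
  obtain ⟨q, rfl⟩ := hp
  rw [Polynomial.derivative_mul, Polynomial.derivative_pow, Polynomial.derivative_X_sub_C,
    Nat.add_sub_cancel, mul_one]
  exact dvd_add ((dvd_mul_left _ _).mul_right _) ((pow_dvd_pow _ (Nat.le_succ n)).mul_right _)

lemma iter_deriv_dvd (c : ℂ) (k : ℕ) (p : Polynomial ℂ)
    (hp : (X - Polynomial.C c) ^ (k + 1) ∣ p) :
    ∀ i, (X - Polynomial.C c) ^ (k + 1 - i) ∣ Polynomial.derivative^[i] p := by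
  intro i
  induction i with
  | zero => simpa using hp
  | succ i ih =>
    rw [Function.iterate_succ_apply']
    rcases le_or_gt (k + 1) i with hle | hlt
    · simpa [Nat.sub_eq_zero_of_le (le_trans hle (Nat.le_succ i))] using one_dvd _
    · have h2 : k + 1 - i = (k + 1 - (i + 1)) + 1 := by omega
      rw [h2] at ih
      exact derivative_dvd_aux c _ _ ih

lemma dd_apply (c : ℂ) (i : ℕ) (p : Polynomial ℂ) :
    dd c i p = (Polynomial.derivative^[i] p).eval c := by
  simp [dd, Module.End.pow_apply]

lemma dd_eq_zero_of_dvd (c : ℂ) (k i : ℕ) (hik : i ≤ k) (p : Polynomial ℂ)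
    (hp : (X - Polynomial.C c) ^ (k + 1) ∣ p) : dd c i p = 0 := by
  rw [dd_apply]
  have h1 := iter_deriv_dvd c k p hp i
  have h2 : (X - Polynomial.C c) ∣ Polynomial.derivative^[i] p :=
    (dvd_pow_self _ (by omega : k + 1 - i ≠ 0)).trans h1
  exact Polynomial.dvd_iff_isRoot.mp h2

end Lemmas

section Lemmas2

variable {N M : ℕ} (c : Fin M → ℂ) (Mu : Fin M → ℕ)
  (e : Fin N ≃ (Σ j : Fin M, Fin (Mu j + 1))) (h : Polynomial ℂ)

lemma dd_h_mul (hh : h = ∏ j, (X - Polynomial.C (c j)) ^ (Mu j + 1))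
    (j : Fin M) (i : ℕ) (hi : i ≤ Mu j) (p : Polynomial ℂ) :
    dd (c j) i (h * p) = 0 := by
  refine dd_eq_zero_of_dvd (c j) (Mu j) i hi _ (Dvd.dvd.mul_right ?_ p)
  rw [hh]
  exact Finset.dvd_prod_of_mem _ (Finset.mem_univ j)

lemma deltaMat_h_mul (hh : h = ∏ j, (X - Polynomial.C (c j)) ^ (Mu j + 1))
    (P : Fin N → Polynomial ℂ) :
    deltaMat c Mu e (fun i => h * P i) = 0 := by
  ext r s
  show deltaVec c Mu e s (h * P r) = 0
  exact dd_h_mul c Mu h hh (e s).1 _ (Nat.lt_succ_iff.mp (e s).2.isLt) (P r)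

lemma comp_decomp (q : Polynomial ℂ) :
    q.comp h = Polynomial.C (q.eval 0) + h * (q.divX.comp h) := by
  conv_lhs => rw [← Polynomial.X_mul_divX_add q]
  rw [Polynomial.add_comp, Polynomial.mul_comp, Polynomial.X_comp, Polynomial.C_comp,
    Polynomial.coeff_zero_eq_eval_zero]
  ring

lemma dd_comp_mul (hh : h = ∏ j, (X - Polynomial.C (c j)) ^ (Mu j + 1))
    (j : Fin M) (i : ℕ) (hi : i ≤ Mu j) (q w : Polynomial ℂ) :
    dd (c j) i (q.comp h * w) = q.eval 0 * dd (c j) i w := by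
  rw [comp_decomp h q, add_mul, map_add, mul_assoc, dd_h_mul c Mu h hh j i hi, add_zero,
    ← Polynomial.smul_eq_C_mul, _root_.map_smul, smul_eq_mul]

lemma deltaMat_Bvec (hh : h = ∏ j, (X - Polynomial.C (c j)) ^ (Mu j + 1))
    (Q : MatPoly N) :
    deltaMat c Mu e (Bvec Q h) = evalM Q 0 * deltaMat c Mu e (P0 N) := by
  ext r s
  show deltaVec c Mu e s (Bvec Q h r) = _
  have : Bvec Q h r = ∑ t, (Q r t).comp h * P0 N t := by
    simp [Bvec, Matrix.mulVec, dotProduct, compH]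
  rw [this, map_sum, Matrix.mul_apply]
  simp only [deltaVec]
  refine Finset.sum_congr rfl fun t _ => ?_
  rw [dd_comp_mul c Mu h hh (e s).1 _ (Nat.lt_succ_iff.mp (e s).2.isLt)]
  rfl

end Lemmas2

section Lemmas3

variable {N : ℕ} (U : Fin N → (Polynomial ℂ →ₗ[ℂ] ℂ)) (h : Polynomial ℂ)

lemma transApply_compH_eq_sum (Q : MatPoly N) (k : ℕ)
    (hdQ : ∀ i j, (Q i j).natDegree ≤ k) (P : Fin N → Polynomial ℂ) :
    transApply U (compH Q h) P
      = ∑ n ∈ Finset.range (k + 1), applyU U (fun i => h ^ n * P i) * leadC Q n := by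
  ext i j
  rw [Matrix.sum_apply]
  show (∑ s, U s ((compH Q h) s j * P i)) = _
  have hcomp : ∀ s : Fin N, (compH Q h) s j
      = ∑ n ∈ Finset.range (k + 1), Polynomial.C ((Q s j).coeff n) * h ^ n := by
    intro s
    show (Q s j).comp h = _
    exact Polynomial.eval₂_eq_sum_range' Polynomial.C (Nat.lt_succ_of_le (hdQ s j)) h
  calc (∑ s, U s ((compH Q h) s j * P i))
      = ∑ s, ∑ n ∈ Finset.range (k + 1), (Q s j).coeff n * U s (h ^ n * P i) := by
        refine Finset.sum_congr rfl fun s _ => ?_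
        rw [hcomp s, Finset.sum_mul, map_sum]
        refine Finset.sum_congr rfl fun n _ => ?_
        rw [mul_assoc, ← Polynomial.smul_eq_C_mul, _root_.map_smul, smul_eq_mul]
    _ = ∑ n ∈ Finset.range (k + 1), ∑ s,
          (applyU U (fun i => h ^ n * P i)) i s * (leadC Q n) s j := by
        rw [Finset.sum_comm]
        exact Finset.sum_congr rfl fun n _ => Finset.sum_congr rfl fun s _ => mul_comm _ _
    _ = _ := by
        refine Finset.sum_congr rfl fun n _ => ?_
        rw [Matrix.mul_apply]

lemma transApply_sum_right (Q : MatPoly N) (k : ℕ) (F : ℕ → Fin N → Polynomial ℂ) :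
    transApply U Q (fun i => ∑ n ∈ Finset.range k, F n i)
      = ∑ n ∈ Finset.range k, transApply U Q (F n) := by
  ext i j
  rw [Matrix.sum_apply]
  show (∑ s, U s (Q s j * ∑ n ∈ Finset.range k, F n i)) = _
  calc (∑ s, U s (Q s j * ∑ n ∈ Finset.range k, F n i))
      = ∑ s, ∑ n ∈ Finset.range k, U s (Q s j * F n i) := by
        refine Finset.sum_congr rfl fun s _ => ?_
        rw [Finset.mul_sum, map_sum]
    _ = ∑ n ∈ Finset.range k, ∑ s, U s (Q s j * F n i) := Finset.sum_comm
    _ = _ := rfl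

lemma transApply_smul_left (Q : MatPoly N) (lam : Matrix (Fin N) (Fin N) ℂ)
    (P : Fin N → Polynomial ℂ) :
    transApply U Q (fun i => ∑ s, Polynomial.C (lam i s) * P s)
      = lam * transApply U Q P := by
  ext i j
  rw [Matrix.mul_apply]
  show (∑ s, U s (Q s j * ∑ u, Polynomial.C (lam i u) * P u)) = _
  calc (∑ s, U s (Q s j * ∑ u, Polynomial.C (lam i u) * P u))
      = ∑ s, ∑ u, lam i u * U s (Q s j * P u) := by
        refine Finset.sum_congr rfl fun s _ => ?_
        rw [Finset.mul_sum, map_sum]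
        refine Finset.sum_congr rfl fun u _ => ?_
        rw [mul_left_comm, ← Polynomial.smul_eq_C_mul, _root_.map_smul, smul_eq_mul]
    _ = ∑ u, ∑ s, lam i u * U s (Q s j * P u) := Finset.sum_comm
    _ = _ := by
        refine Finset.sum_congr rfl fun u _ => ?_
        rw [← Finset.mul_sum]
        rfl

lemma Bvec_matC_mul (lam : Matrix (Fin N) (Fin N) ℂ) (R : MatPoly N) (i : Fin N) :
    Bvec ((lam.map Polynomial.C) * R) h i = ∑ s, Polynomial.C (lam i s) * Bvec R h s := by
  have hcomp : compH ((lam.map Polynomial.C) * R) h = (lam.map Polynomial.C) * compH R h := by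
    refine Matrix.ext fun a b => ?_
    show (∑ s, Polynomial.C (lam a s) * R s b).comp h = ∑ s, Polynomial.C (lam a s) * (R s b).comp h
    rw [Polynomial.sum_comp]
    exact Finset.sum_congr rfl fun s _ => by
      rw [Polynomial.mul_comp, Polynomial.C_comp]
  show (compH ((lam.map Polynomial.C) * R) h).mulVec (P0 N) i = _
  rw [hcomp, ← Matrix.mulVec_mulVec]
  show (∑ s, (lam.map Polynomial.C) i s * (compH R h).mulVec (P0 N) s) = _
  rfl

lemma Bvec_sum (m : ℕ) (F : ℕ → MatPoly N) (i : Fin N) :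
    Bvec (∑ k ∈ Finset.range m, F k) h i = ∑ k ∈ Finset.range m, Bvec (F k) h i := by
  have : compH (∑ k ∈ Finset.range m, F k) h = ∑ k ∈ Finset.range m, compH (F k) h := by
    refine Matrix.ext fun a b => ?_
    show ((∑ k ∈ Finset.range m, F k) a b).comp h
        = (∑ k ∈ Finset.range m, compH (F k) h) a b
    rw [Matrix.sum_apply, Polynomial.sum_comp, Matrix.sum_apply]
    rfl
  show (compH (∑ k ∈ Finset.range m, F k) h).mulVec (P0 N) i = _
  rw [this]
  simp [Matrix.mulVec, dotProduct, Matrix.sum_apply, Finset.sum_mul]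
  exact Finset.sum_comm

lemma evalM_sum {ι : Type*} (s : Finset ι) (f : ι → MatPoly N) (z : ℂ) :
    evalM (∑ k ∈ s, f k) z = ∑ k ∈ s, evalM (f k) z := by
  ext i j
  simp [evalM, Matrix.sum_apply, Polynomial.eval_finset_sum]

lemma evalM_matC_mul (lam : Matrix (Fin N) (Fin N) ℂ) (Q : MatPoly N) (z : ℂ) :
    evalM ((lam.map Polynomial.C) * Q) z = lam * evalM Q z := by
  ext i j
  simp [evalM, Matrix.mul_apply, Polynomial.eval_finset_sum]

lemma leadC_zero_eq_evalM (Q : MatPoly N) : leadC Q 0 = evalM Q 0 := by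
  ext i j
  exact Polynomial.coeff_zero_eq_eval_zero _

end Lemmas3

section Lemmas4

lemma expand_in_V {N : ℕ} (V : ℕ → MatPoly N) (hV0I : V 0 = 1)
    (hdV : ∀ m, ∀ i j, ((V m) i j).natDegree ≤ m)
    (hlV : ∀ m, IsUnit (leadC (V m) m)) :
    ∀ (m : ℕ) (Q : MatPoly N), (∀ i j, (Q i j).natDegree ≤ m) →
      ∃ lam : ℕ → Matrix (Fin N) (Fin N) ℂ,
        Q = ∑ k ∈ Finset.range (m + 1), (lam k).map Polynomial.C * V k := by
  intro m
  induction m with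
  | zero =>
    intro Q hQ
    refine ⟨fun _ => leadC Q 0, ?_⟩
    rw [Finset.sum_range_one, hV0I, mul_one]
    refine Matrix.ext fun i j => ?_
    show Q i j = Polynomial.C ((Q i j).coeff 0)
    exact Polynomial.eq_C_of_natDegree_le_zero (hQ i j)
  | succ m ih =>
    intro Q hQ
    obtain ⟨u, hu⟩ := hlV (m + 1)
    set μ : Matrix (Fin N) (Fin N) ℂ :=
      leadC Q (m + 1) * (↑u⁻¹ : Matrix (Fin N) (Fin N) ℂ) with hμ
    have hμl : μ * leadC (V (m + 1)) (m + 1) = leadC Q (m + 1) := by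
      rw [hμ, mul_assoc, ← hu, u.inv_mul, mul_one]
    have hdeg' : ∀ i j, ((Q - (μ.map Polynomial.C) * V (m + 1)) i j).natDegree ≤ m := by
      intro i j
      rw [Polynomial.natDegree_le_iff_coeff_eq_zero]
      intro n hn
      have hterm : ∀ n : ℕ, (((μ.map Polynomial.C) * V (m + 1)) i j).coeff n
          = ∑ s, μ i s * ((V (m + 1)) s j).coeff n := by
        intro n
        rw [Matrix.mul_apply, Polynomial.finset_sum_coeff]
        refine Finset.sum_congr rfl fun s _ => ?_
        show (Polynomial.C (μ i s) * _).coeff n = _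
        rw [Polynomial.coeff_C_mul]
      have hQn : ((Q - (μ.map Polynomial.C) * V (m + 1)) i j).coeff n
          = (Q i j).coeff n - ∑ s, μ i s * ((V (m + 1)) s j).coeff n := by
        rw [Matrix.sub_apply, Polynomial.coeff_sub, hterm]
      rcases Nat.lt_or_ge (m + 1) n with hlt | hge
      · rw [hQn, Polynomial.coeff_eq_zero_of_natDegree_lt (lt_of_le_of_lt (hQ i j) hlt),
          Finset.sum_eq_zero fun s _ => by
            rw [Polynomial.coeff_eq_zero_of_natDegree_lt
              (lt_of_le_of_lt (hdV (m + 1) s j) hlt), mul_zero],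
          sub_zero]
      · have hn1 : n = m + 1 := by omega
        subst hn1
        rw [hQn]
        have hentry : (∑ s, μ i s * ((V (m + 1)) s j).coeff (m + 1))
            = (Q i j).coeff (m + 1) := by
          have h3 := congrFun (congrFun hμl i) j
          rw [Matrix.mul_apply] at h3
          exact h3
        rw [hentry, sub_self]
    obtain ⟨lam', hlam'⟩ := ih _ hdeg'
    refine ⟨fun k => if k = m + 1 then μ else lam' k, ?_⟩
    rw [Finset.sum_range_succ]
    have h1 : ((fun k => if k = m + 1 then μ else lam' k) (m + 1)).map Polynomial.C * V (m + 1)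
        = μ.map Polynomial.C * V (m + 1) := by simp
    have h2 : (∑ x ∈ Finset.range (m + 1),
          ((fun k => if k = m + 1 then μ else lam' k) x).map Polynomial.C * V x)
        = ∑ x ∈ Finset.range (m + 1), (lam' x).map Polynomial.C * V x := by
      refine Finset.sum_congr rfl fun k hk => ?_
      have hne : k ≠ m + 1 := by have := Finset.mem_range.mp hk; omega
      simp [hne]
    rw [h1, h2, ← hlam']
    abel

lemma applyU_pow_Bvec {N M : ℕ} (U : Fin N → (Polynomial ℂ →ₗ[ℂ] ℂ))
    (Λ : Matrix (Fin N) (Fin N) ℂ) (c : Fin M → ℂ) (Mu : Fin M → ℕ)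
    (e : Fin N ≃ (Σ j : Fin M, Fin (Mu j + 1))) (h : Polynomial ℂ)
    (hh : h = ∏ j, (X - Polynomial.C (c j)) ^ (Mu j + 1))
    (Vt : ℕ → MatPoly N)
    (hleftt : ∀ m, ∀ k < m, applyUt U Λ c Mu e (fun i => h ^ k * Bvec (Vt m) h i) = 0)
    (m n : ℕ) (hn : n ≤ m) :
    applyU U (fun i => h ^ n * Bvec (Vt m) h i)
      = (if n = m then applyUt U Λ c Mu e (fun i => h ^ m * Bvec (Vt m) h i) else 0)
        - (if n = 0 then evalM (Vt m) 0 * deltaMat c Mu e (P0 N) * Λ.transpose else 0) := by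
  have hsplit : applyU U (fun i => h ^ n * Bvec (Vt m) h i)
      = applyUt U Λ c Mu e (fun i => h ^ n * Bvec (Vt m) h i)
        - deltaMat c Mu e (fun i => h ^ n * Bvec (Vt m) h i) * Λ.transpose := by
    rw [applyUt, add_sub_cancel_right]
  rw [hsplit]
  congr 1
  · rcases eq_or_lt_of_le hn with rfl | hlt
    · rw [if_pos rfl]
    · rw [if_neg (Nat.ne_of_lt hlt), hleftt m n hlt]
  · rcases Nat.eq_zero_or_pos n with rfl | hpos
    · rw [if_pos rfl]
      have hfun : (fun i => h ^ 0 * Bvec (Vt m) h i) = Bvec (Vt m) h := by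
        funext i; rw [pow_zero, one_mul]
      rw [hfun, deltaMat_Bvec c Mu e h hh]
    · obtain ⟨n', rfl⟩ := Nat.exists_eq_succ_of_ne_zero hpos.ne'
      rw [if_neg (Nat.succ_ne_zero n')]
      have hfun : (fun i => h ^ (n' + 1) * Bvec (Vt m) h i)
          = fun i => h * (h ^ n' * Bvec (Vt m) h i) := by
        funext i; rw [pow_succ']; ring
      rw [hfun, deltaMat_h_mul c Mu e h hh, Matrix.zero_mul]

lemma telescope_sum {N : ℕ} (A B C : ℕ → Matrix (Fin N) (Fin N) ℂ) (V G : ℕ → MatPoly N)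
    (hVrec0 : ∀ z : ℂ, z • evalM (V 0) z = A 0 * evalM (V 1) z + B 0 * evalM (V 0) z)
    (hVrec : ∀ (m : ℕ) (z : ℂ), z • evalM (V (m + 1)) z =
      A (m + 1) * evalM (V (m + 2)) z + B (m + 1) * evalM (V (m + 1)) z +
        C (m + 1) * evalM (V m) z)
    (hGrec0 : ∀ z : ℂ, z • evalM (G 0) z = evalM (G 0) z * B 0 + evalM (G 1) z * C 1)
    (hGrec : ∀ (m : ℕ) (z : ℂ), z • evalM (G (m + 1)) z =
      evalM (G m) z * A m + evalM (G (m + 1)) z * B (m + 1) +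
        evalM (G (m + 2)) z * C (m + 2)) :
    ∀ (m : ℕ) (z : ℂ), ∑ k ∈ Finset.range (m + 1), evalM (G k) 0 * (z • evalM (V k) z)
      = evalM (G m) 0 * A m * evalM (V (m + 1)) z
        - evalM (G (m + 1)) 0 * C (m + 1) * evalM (V m) z := by
  intro m
  induction m with
  | zero =>
    intro z
    have h0 : (0 : Matrix (Fin N) (Fin N) ℂ) = evalM (G 0) 0 * B 0 + evalM (G 1) 0 * C 1 := by
      have := hGrec0 0; rwa [zero_smul] at this
    have hB : evalM (G 0) 0 * B 0 = -(evalM (G 1) 0 * C 1) := by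
      rw [eq_neg_iff_add_eq_zero, ← h0.symm]
    rw [Finset.sum_range_one, hVrec0 z, mul_add, ← Matrix.mul_assoc, ← Matrix.mul_assoc, hB,
      neg_mul]
    abel
  | succ m ih =>
    intro z
    have h0 : (0 : Matrix (Fin N) (Fin N) ℂ) = evalM (G m) 0 * A m
        + evalM (G (m + 1)) 0 * B (m + 1) + evalM (G (m + 2)) 0 * C (m + 2) := by
      have := hGrec m 0; rwa [zero_smul] at this
    have hB : evalM (G (m + 1)) 0 * B (m + 1)
        = -(evalM (G m) 0 * A m) - evalM (G (m + 2)) 0 * C (m + 2) := by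
      have h1 : evalM (G m) 0 * A m + evalM (G (m + 1)) 0 * B (m + 1)
          + evalM (G (m + 2)) 0 * C (m + 2) = 0 := h0.symm
      calc evalM (G (m + 1)) 0 * B (m + 1)
          = (evalM (G m) 0 * A m + evalM (G (m + 1)) 0 * B (m + 1)
              + evalM (G (m + 2)) 0 * C (m + 2)) - evalM (G m) 0 * A m
              - evalM (G (m + 2)) 0 * C (m + 2) := by abel
        _ = _ := by rw [h1]; abel
    rw [Finset.sum_range_succ, ih z, hVrec m z, mul_add, mul_add,
      ← Matrix.mul_assoc, ← Matrix.mul_assoc, ← Matrix.mul_assoc, hB, sub_mul, neg_mul]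
    abel

end Lemmas4

section Connection

lemma connection_formula {N M : ℕ}
    (c : Fin M → ℂ) (Mu : Fin M → ℕ) (h : Polynomial ℂ)
    (hh : h = ∏ j, (X - Polynomial.C (c j)) ^ (Mu j + 1))
    (e : Fin N ≃ (Σ j : Fin M, Fin (Mu j + 1)))
    (U : Fin N → (Polynomial ℂ →ₗ[ℂ] ℂ)) (Λ : Matrix (Fin N) (Fin N) ℂ)
    (V G : ℕ → MatPoly N) (hV0I : V 0 = 1)
    (hdV : ∀ m, ∀ i j, ((V m) i j).natDegree ≤ m)
    (hlV : ∀ m, IsUnit (leadC (V m) m))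
    (hdG : ∀ m, ∀ i j, ((G m) i j).natDegree ≤ m)
    (hbi : ∀ n m, transApply U (compH (G n) h) (Bvec (V m) h) = if n = m then 1 else 0)
    (Vt : ℕ → MatPoly N) (hdVt : ∀ m, ∀ i j, ((Vt m) i j).natDegree ≤ m)
    (hleftt : ∀ m, ∀ k < m, applyUt U Λ c Mu e (fun i => h ^ k * Bvec (Vt m) h i) = 0)
    (hK : ∀ m : ℕ, IsUnit ((1 : Matrix (Fin N) (Fin N) ℂ) +
      deltaMat c Mu e (P0 N) * Λ.transpose * Kzero V G m))
    (m : ℕ) (z : ℂ) :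
    evalM (Vt m) z = Dmat U Λ c Mu e h G Vt m * evalM (V m) z
      - Lmat U Λ c Mu e h V G Vt m *
          ∑ k ∈ Finset.range (m + 1), evalM (G k) 0 * evalM (V k) z := by
  obtain ⟨W, hW⟩ : ∃ W, W = evalM (Vt m) 0 * deltaMat c Mu e (P0 N) * Λ.transpose :=
    ⟨_, rfl⟩
  obtain ⟨lam, hexp⟩ := expand_in_V V hV0I hdV hlV m (Vt m) (hdVt m)
  -- Step A: the coefficients are recovered by bi-orthogonality
  have hlam : ∀ k, k ≤ m → transApply U (compH (G k) h) (Bvec (Vt m) h) = lam k := by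
    intro k hk
    calc transApply U (compH (G k) h) (Bvec (Vt m) h)
        = ∑ k' ∈ Finset.range (m + 1),
            transApply U (compH (G k) h) (Bvec ((lam k').map Polynomial.C * V k') h) := by
          conv_lhs => rw [hexp]
          rw [show Bvec (∑ k' ∈ Finset.range (m + 1), (lam k').map Polynomial.C * V k') h
              = (fun i => ∑ k' ∈ Finset.range (m + 1),
                  Bvec ((lam k').map Polynomial.C * V k') h i) from
            funext fun i => Bvec_sum h (m + 1) _ i]
          exact transApply_sum_right U _ _ _
      _ = ∑ k' ∈ Finset.range (m + 1),
            lam k' * transApply U (compH (G k) h) (Bvec (V k') h) := by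
          refine Finset.sum_congr rfl fun k' _ => ?_
          rw [show Bvec ((lam k').map Polynomial.C * V k') h
              = (fun i => ∑ s, Polynomial.C (lam k' i s) * Bvec (V k') h s) from
            funext fun i => Bvec_matC_mul h _ _ i]
          exact transApply_smul_left U _ _ _
      _ = lam k := by
          simp only [hbi, mul_ite, mul_one, mul_zero, Finset.sum_ite_eq,
            Finset.mem_range, if_pos (Nat.lt_succ_of_le hk)]
  -- Step B: compute the coefficients from orthogonality of the modified sequence
  have hlamval : ∀ k, k ≤ m →
      lam k = (if k = m then Dmat U Λ c Mu e h G Vt m else 0) - W * evalM (G k) 0 := by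
    intro k hk
    rw [← hlam k hk,
      transApply_compH_eq_sum U h (G k) k (hdG k) (Bvec (Vt m) h),
      Finset.sum_congr rfl fun n hn => by
        rw [applyU_pow_Bvec U Λ c Mu e h hh Vt hleftt m n
          (le_trans (Nat.lt_succ_iff.mp (Finset.mem_range.mp hn)) hk)]]
    simp only [sub_mul, ite_mul, zero_mul]
    rw [Finset.sum_sub_distrib, Finset.sum_ite_eq', Finset.sum_ite_eq',
      if_pos (Finset.mem_range.mpr (Nat.succ_pos k)), leadC_zero_eq_evalM, ← hW]
    congr 1
    rcases eq_or_lt_of_le hk with rfl | hlt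
    · rw [if_pos (Finset.mem_range.mpr (Nat.lt_succ_self k)), if_pos rfl]
      rfl
    · rw [if_neg (by simpa using hlt), if_neg (Nat.ne_of_lt hlt)]
  -- Step C: evaluation of the expansion
  have hval : ∀ w : ℂ, evalM (Vt m) w
      = (∑ k ∈ Finset.range (m + 1), (if k = m then Dmat U Λ c Mu e h G Vt m else 0)
            * evalM (V k) w)
        - W * ∑ k ∈ Finset.range (m + 1), evalM (G k) 0 * evalM (V k) w := by
    intro w
    conv_lhs => rw [hexp]
    rw [evalM_sum,
      Finset.sum_congr rfl fun k _ => evalM_matC_mul (lam k) (V k) w,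
      Finset.sum_congr rfl fun k hk => by
        rw [hlamval k (Nat.lt_succ_iff.mp (Finset.mem_range.mp hk)), sub_mul]]
    rw [Finset.sum_sub_distrib, Finset.mul_sum]
    congr 1
    exact Finset.sum_congr rfl fun k _ => (mul_assoc _ _ _)
  have hvalD : ∀ w : ℂ, evalM (Vt m) w
      = Dmat U Λ c Mu e h G Vt m * evalM (V m) w
        - W * ∑ k ∈ Finset.range (m + 1), evalM (G k) 0 * evalM (V k) w := by
    intro w
    rw [hval w]
    congr 1
    simp only [ite_mul, zero_mul]
    rw [Finset.sum_ite_eq', if_pos (Finset.mem_range.mpr (Nat.lt_succ_self m))]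
  -- Step D: identify W with Lmat
  have h0 : evalM (Vt m) 0 *
        ((1 : Matrix (Fin N) (Fin N) ℂ)
          + deltaMat c Mu e (P0 N) * Λ.transpose * Kzero V G m)
      = Dmat U Λ c Mu e h G Vt m * evalM (V m) 0 := by
    have hWK : evalM (Vt m) 0 * (deltaMat c Mu e (P0 N) * Λ.transpose * Kzero V G m)
        = W * Kzero V G m := by
      rw [hW, Matrix.mul_assoc, Matrix.mul_assoc, Matrix.mul_assoc]
    rw [mul_add, mul_one, hWK]
    have hK0 : (∑ k ∈ Finset.range (m + 1), evalM (G k) 0 * evalM (V k) 0)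
        = Kzero V G m := rfl
    have := hvalD 0
    rw [hK0] at this
    rw [this]
    abel
  have hdet : IsUnit ((1 : Matrix (Fin N) (Fin N) ℂ)
      + deltaMat c Mu e (P0 N) * Λ.transpose * Kzero V G m).det :=
    (Matrix.isUnit_iff_isUnit_det _).mp (hK m)
  have hV0 : evalM (Vt m) 0 = Dmat U Λ c Mu e h G Vt m * evalM (V m) 0 *
      ((1 : Matrix (Fin N) (Fin N) ℂ)
        + deltaMat c Mu e (P0 N) * Λ.transpose * Kzero V G m)⁻¹ := by
    calc evalM (Vt m) 0
        = evalM (Vt m) 0 * (((1 : Matrix (Fin N) (Fin N) ℂ)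
            + deltaMat c Mu e (P0 N) * Λ.transpose * Kzero V G m)
          * ((1 : Matrix (Fin N) (Fin N) ℂ)
            + deltaMat c Mu e (P0 N) * Λ.transpose * Kzero V G m)⁻¹) := by
          rw [Matrix.mul_nonsing_inv _ hdet, mul_one]
      _ = evalM (Vt m) 0 * ((1 : Matrix (Fin N) (Fin N) ℂ)
            + deltaMat c Mu e (P0 N) * Λ.transpose * Kzero V G m)
          * ((1 : Matrix (Fin N) (Fin N) ℂ)
            + deltaMat c Mu e (P0 N) * Λ.transpose * Kzero V G m)⁻¹ :=
          (Matrix.mul_assoc _ _ _).symm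
      _ = _ := by rw [h0]
  have hWL : W = Lmat U Λ c Mu e h V G Vt m := by
    rw [hW, hV0]
    simp only [Lmat, Matrix.mul_assoc]
  rw [hvalD z, hWL]

end Connection


/-- **Three-term formula relating the Dirac-modified polynomials to the original ones**:
`z Ṽ_m(z) = α¹_{m+1} V_{m+1}(z) + α²_m V_m(z) + α³_{m-1} V_{m-1}(z)` with
`α¹_{m+1} = D_m A_m - L_m G_m(0) A_m`, `α²_m = D_m B_m + L_m G_{m+1}(0) C_{m+1}`,
`α³_{m-1} = D_m C_m` (the term `α³_{-1} V_{-1}` being absent for `m = 0`). -/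
theorem modified_polynomials_three_term_formula
    (N M : ℕ) (hN : 1 ≤ N)
    (c : Fin M → ℂ) (hc : Function.Injective c) (Mu : Fin M → ℕ)
    (h : Polynomial ℂ)
    (hh : h = ∏ j, (Polynomial.X - Polynomial.C (c j)) ^ (Mu j + 1))
    (hdeg : h.natDegree = N)
    (e : Fin N ≃ (Σ j : Fin M, Fin (Mu j + 1)))
    (U : Fin N → (Polynomial ℂ →ₗ[ℂ] ℂ))
    (Λ : Matrix (Fin N) (Fin N) ℂ)
    (A B C : ℕ → Matrix (Fin N) (Fin N) ℂ)
    (hA : ∀ m, IsUnit (A m)) (hC : ∀ m, IsUnit (C m))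
    (V G : ℕ → MatPoly N)
    (hV0I : V 0 = 1)
    (hdV : ∀ m, ∀ i j, ((V m) i j).natDegree ≤ m)
    (hlV : ∀ m, IsUnit (leadC (V m) m))
    (hdG : ∀ m, ∀ i j, ((G m) i j).natDegree ≤ m)
    (hlG : ∀ m, IsUnit (leadC (G m) m))
    (hVrec0 : ∀ z : ℂ, z • evalM (V 0) z = A 0 * evalM (V 1) z + B 0 * evalM (V 0) z)
    (hVrec : ∀ (m : ℕ) (z : ℂ), z • evalM (V (m + 1)) z =
      A (m + 1) * evalM (V (m + 2)) z + B (m + 1) * evalM (V (m + 1)) z +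
        C (m + 1) * evalM (V m) z)
    (hGrec0 : ∀ z : ℂ, z • evalM (G 0) z = evalM (G 0) z * B 0 + evalM (G 1) z * C 1)
    (hGrec : ∀ (m : ℕ) (z : ℂ), z • evalM (G (m + 1)) z =
      evalM (G m) z * A m + evalM (G (m + 1)) z * B (m + 1) +
        evalM (G (m + 2)) z * C (m + 2))
    (hleft : ∀ m, ∀ k < m, applyU U (fun i => h ^ k * Bvec (V m) h i) = 0)
    (hleftn : ∀ m, IsUnit (applyU U fun i => h ^ m * Bvec (V m) h i))
    (hright : ∀ m, ∀ j < m,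
      transApply U (compH (G m) h) (fun i => h ^ j * P0 N i) = 0)
    (hrightn : ∀ m, IsUnit (transApply U (compH (G m) h) fun i => h ^ m * P0 N i))
    (hbi : ∀ n m, transApply U (compH (G n) h) (Bvec (V m) h) =
      if n = m then 1 else 0)
    -- a left-orthogonal sequence for the modified functional `Ũ = U + Λδ`
    (Vt : ℕ → MatPoly N)
    (hdVt : ∀ m, ∀ i j, ((Vt m) i j).natDegree ≤ m)
    (hlVt : ∀ m, IsUnit (leadC (Vt m) m))
    (hleftt : ∀ m, ∀ k < m, applyUt U Λ c Mu e (fun i => h ^ k * Bvec (Vt m) h i) = 0)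
    (hlefttn : ∀ m, IsUnit (applyUt U Λ c Mu e fun i => h ^ m * Bvec (Vt m) h i))
    -- hence the matrices `I + δ(P₀) Λᵀ K_{m+1}(c_l,c_l)` are nonsingular
    (hK : ∀ m : ℕ, IsUnit ((1 : Matrix (Fin N) (Fin N) ℂ) +
      deltaMat c Mu e (P0 N) * Λ.transpose * Kzero V G m)) :
    (∀ z : ℂ, z • evalM (Vt 0) z =
        (Dmat U Λ c Mu e h G Vt 0 * A 0
            - Lmat U Λ c Mu e h V G Vt 0 * evalM (G 0) 0 * A 0) * evalM (V 1) z
          + (Dmat U Λ c Mu e h G Vt 0 * B 0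
              + Lmat U Λ c Mu e h V G Vt 0 * evalM (G 1) 0 * C 1) * evalM (V 0) z)
    ∧ (∀ (m : ℕ) (z : ℂ), z • evalM (Vt (m + 1)) z =
        (Dmat U Λ c Mu e h G Vt (m + 1) * A (m + 1)
            - Lmat U Λ c Mu e h V G Vt (m + 1) * evalM (G (m + 1)) 0 * A (m + 1))
            * evalM (V (m + 2)) z
          + (Dmat U Λ c Mu e h G Vt (m + 1) * B (m + 1)
              + Lmat U Λ c Mu e h V G Vt (m + 1) * evalM (G (m + 2)) 0 * C (m + 2))
              * evalM (V (m + 1)) z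
          + Dmat U Λ c Mu e h G Vt (m + 1) * C (m + 1) * evalM (V m) z) := by
  constructor
  · intro z
    have hcon := connection_formula c Mu h hh e U Λ V G hV0I hdV hlV hdG hbi Vt hdVt
      hleftt hK 0 z
    rw [hcon, smul_sub, ← mul_smul_comm, ← mul_smul_comm, Finset.smul_sum,
      Finset.sum_congr rfl fun k _ => (mul_smul_comm z (evalM (G k) 0) (evalM (V k) z)).symm,
      telescope_sum A B C V G hVrec0 hVrec hGrec0 hGrec 0 z, hVrec0 z]
    noncomm_ring
  · intro m z
    have hcon := connection_formula c Mu h hh e U Λ V G hV0I hdV hlV hdG hbi Vt hdVt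
      hleftt hK (m + 1) z
    rw [hcon, smul_sub, ← mul_smul_comm, ← mul_smul_comm, Finset.smul_sum,
      Finset.sum_congr rfl fun k _ => (mul_smul_comm z (evalM (G k) 0) (evalM (V k) z)).symm,
      telescope_sum A B C V G hVrec0 hVrec hGrec0 hGrec (m + 1) z, hVrec m z]
    noncomm_ring

end
end

section
/- Leading-coefficient identity for the Dirac-modified polynomials: under the stated setup, let α_m^m, α̃_m^m be the leading coefficients of V_m, Ṽ_m and β_m^m, β̃_m^m the leading coefficients of G_m, G̃_m. Then for every m ≥ 0: ( (β_m^m)^{-1} β̃_m^m ) · ( α̃_m^m (α_m^m)^{-1} ) = I − V_m(0) · ( I + δ(P_0)Λ^T K_{m+1}(c_l,c_l) )^{-1} · δ(P_0)Λ^T · G_m(0), where c_l is any zero of h. -/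
open Polynomial Matrix Finset

noncomputable section

/-- The components `ũ^j = u^j + Σ_t Λ_{j,t} δ^t` of the modified vector functional
`Ũ = U + Λδ`. -/
def Utf {N M : ℕ} (U : Fin N → (Polynomial ℂ →ₗ[ℂ] ℂ))
    (Λ : Matrix (Fin N) (Fin N) ℂ) (c : Fin M → ℂ) (Mu : Fin M → ℕ)
    (e : Fin N ≃ (Σ j : Fin M, Fin (Mu j + 1))) : Fin N → (Polynomial ℂ →ₗ[ℂ] ℂ) :=
  fun j => U j + ∑ t, Λ j t • deltaVec c Mu e t

/-! ### Auxiliary lemmas -/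

namespace MPAux

variable {N M : ℕ}

/-- Constant matrix as a matrix polynomial. -/
def cM {N : ℕ} (A : Matrix (Fin N) (Fin N) ℂ) : MatPoly N := A.map Polynomial.C

lemma dd_apply (a : ℂ) (i : ℕ) (p : Polynomial ℂ) :
    dd a i p = Polynomial.eval a (Polynomial.derivative^[i] p) := by
  simp [dd, Module.End.pow_apply, Polynomial.leval_apply]

lemma deriv_iter_eval_zero (a : ℂ) : ∀ (i : ℕ) (r : Polynomial ℂ),
    Polynomial.eval a (Polynomial.derivative^[i] ((X - Polynomial.C a) ^ (i + 1) * r)) = 0 := by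
  intro i
  induction i with
  | zero => intro r; simp
  | succ i ih =>
    intro r
    rw [Function.iterate_succ_apply]
    have h1 : Polynomial.derivative ((X - Polynomial.C a) ^ (i + 2))
        = (Polynomial.C ((i : ℂ) + 2)) * (X - Polynomial.C a) ^ (i + 1) := by
      rw [Polynomial.derivative_pow]
      push_cast
      simp [Nat.add_sub_cancel]
    have hd : Polynomial.derivative ((X - Polynomial.C a) ^ (i + 2) * r)
        = (X - Polynomial.C a) ^ (i + 1) *
          (Polynomial.C ((i : ℂ) + 2) * r + (X - Polynomial.C a) * Polynomial.derivative r) := by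
      rw [Polynomial.derivative_mul, h1]; ring
    rw [show i + 1 + 1 = i + 2 from rfl, hd, ih]

lemma dd_of_dvd (a : ℂ) (i : ℕ) (p : Polynomial ℂ)
    (hp : (X - Polynomial.C a) ^ (i + 1) ∣ p) : dd a i p = 0 := by
  obtain ⟨r, rfl⟩ := hp
  rw [dd_apply]
  exact deriv_iter_eval_zero a i r


lemma compH_eq_map (Q : MatPoly N) (h : Polynomial ℂ) :
    compH Q h = Q.map (Polynomial.eval₂RingHom Polynomial.C h) := by
  ext i j; simp [compH, Polynomial.comp]

lemma compH_mul (A B : MatPoly N) (h : Polynomial ℂ) :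
    compH (A * B) h = compH A h * compH B h := by
  simp only [compH_eq_map]; exact Matrix.map_mul

lemma compH_sum {α : Type*} (s : Finset α) (Q : α → MatPoly N) (h : Polynomial ℂ) :
    compH (∑ n ∈ s, Q n) h = ∑ n ∈ s, compH (Q n) h := by
  funext i j
  simp [compH_eq_map, Matrix.sum_apply, Matrix.map_apply, Polynomial.eval₂_finset_sum]

lemma compH_cM (A : Matrix (Fin N) (Fin N) ℂ) (h : Polynomial ℂ) :
    compH (cM A) h = cM A := by
  ext i j; simp [compH, cM]

lemma evalM_mul (A B : MatPoly N) (z : ℂ) :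
    evalM (A * B) z = evalM A z * evalM B z := by
  have : ∀ Q : MatPoly N, evalM Q z = Q.map (Polynomial.evalRingHom z) := by
    intro Q; ext i j; simp [evalM]
  simp only [this]; exact Matrix.map_mul

lemma evalM_sum {α : Type*} (s : Finset α) (Q : α → MatPoly N) (z : ℂ) :
    evalM (∑ n ∈ s, Q n) z = ∑ n ∈ s, evalM (Q n) z := by
  ext i j; simp [evalM, Matrix.sum_apply, Matrix.map_apply, Polynomial.eval_finset_sum]

lemma evalM_cM (A : Matrix (Fin N) (Fin N) ℂ) (z : ℂ) : evalM (cM A) z = A := by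
  ext i j; simp [evalM, cM]

lemma leadC_add (A B : MatPoly N) (m : ℕ) : leadC (A + B) m = leadC A m + leadC B m := by
  ext i j; simp [leadC]

lemma leadC_sum {α : Type*} (s : Finset α) (Q : α → MatPoly N) (m : ℕ) :
    leadC (∑ n ∈ s, Q n) m = ∑ n ∈ s, leadC (Q n) m := by
  ext i j; simp [leadC, Matrix.sum_apply, Polynomial.finset_sum_coeff]

lemma leadC_cM_mul (A : Matrix (Fin N) (Fin N) ℂ) (Q : MatPoly N) (m : ℕ) :
    leadC (cM A * Q) m = A * leadC Q m := by
  ext i j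
  simp [leadC, cM, Matrix.mul_apply, Polynomial.finset_sum_coeff, Polynomial.coeff_C_mul]

lemma leadC_mul_cM (Q : MatPoly N) (A : Matrix (Fin N) (Fin N) ℂ) (m : ℕ) :
    leadC (Q * cM A) m = leadC Q m * A := by
  ext i j
  simp [leadC, cM, Matrix.mul_apply, Polynomial.finset_sum_coeff, Polynomial.coeff_mul_C]

lemma leadC_eq_zero_of_lt (Q : MatPoly N) {n m : ℕ} (hn : n < m)
    (hd : ∀ i j, (Q i j).natDegree ≤ n) : leadC Q m = 0 := by
  ext i j
  exact Polynomial.coeff_eq_zero_of_natDegree_lt (lt_of_le_of_lt (hd i j) hn)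

lemma leadC_zero_eq_evalM (Q : MatPoly N) : leadC Q 0 = evalM Q 0 := by
  ext i j; simp [leadC, evalM, Polynomial.coeff_zero_eq_eval_zero]

lemma cM_mul (A B : Matrix (Fin N) (Fin N) ℂ) : cM (A * B) = cM A * cM B := by
  unfold cM; exact Matrix.map_mul (f := Polynomial.C)

lemma leadC_sub (A B : MatPoly N) (m : ℕ) : leadC (A - B) m = leadC A m - leadC B m := by
  ext i j; simp [leadC]

lemma cM_of_deg0 (W : MatPoly N) (hW : ∀ i j, (W i j).natDegree ≤ 0) :
    cM (leadC W 0) = W := by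
  funext i j
  simp only [cM, leadC, Matrix.map_apply, Matrix.of_apply]
  exact (Polynomial.eq_C_of_natDegree_le_zero (hW i j)).symm

lemma natDegree_le_of_leadC (W : MatPoly N) (m : ℕ)
    (hW : ∀ k, m < k → leadC W k = 0) : ∀ i j, (W i j).natDegree ≤ m := by
  intro i j
  rw [Polynomial.natDegree_le_iff_coeff_eq_zero]
  intro k hk
  have := hW k hk
  exact congrFun (congrFun this i) j

/-- Left expansion of a matrix polynomial of degree `≤ m` in a basis with invertible
leading coefficients. -/
lemma expandLeft (V : ℕ → MatPoly N) (hdV : ∀ n, ∀ i j, ((V n) i j).natDegree ≤ n)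
    (hlV : ∀ n, IsUnit (leadC (V n) n)) :
    ∀ (m : ℕ) (W : MatPoly N), (∀ i j, (W i j).natDegree ≤ m) →
      ∃ C : ℕ → Matrix (Fin N) (Fin N) ℂ,
        W = ∑ n ∈ Finset.range (m + 1), cM (C n) * V n := by
  intro m
  induction m with
  | zero =>
    intro W hW
    refine ⟨fun _ => leadC W 0 * (leadC (V 0) 0)⁻¹, ?_⟩
    have hC : leadC W 0 * (leadC (V 0) 0)⁻¹ * leadC (V 0) 0 = leadC W 0 := by
      rw [Matrix.mul_assoc,
        Matrix.nonsing_inv_mul _ ((Matrix.isUnit_iff_isUnit_det _).mp (hlV 0)),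
        Matrix.mul_one]
    rw [Finset.sum_range_one]
    calc W = cM (leadC W 0) := (cM_of_deg0 W hW).symm
      _ = cM (leadC W 0 * (leadC (V 0) 0)⁻¹ * leadC (V 0) 0) := by rw [hC]
      _ = cM (leadC W 0 * (leadC (V 0) 0)⁻¹) * cM (leadC (V 0) 0) := cM_mul _ _
      _ = cM (leadC W 0 * (leadC (V 0) 0)⁻¹) * V 0 := by rw [cM_of_deg0 (V 0) (hdV 0)]
  | succ m ih =>
    intro W hW
    set Cm := leadC W (m + 1) * (leadC (V (m + 1)) (m + 1))⁻¹ with hCm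
    set W' := W - cM Cm * V (m + 1) with hW'def
    have hcoW : ∀ k, m + 1 ≤ k → leadC W' k = leadC W k - Cm * leadC (V (m + 1)) k := by
      intro k _
      rw [hW'def, leadC_sub, leadC_cM_mul]
    have hW' : ∀ i j, (W' i j).natDegree ≤ m := by
      apply natDegree_le_of_leadC
      intro k hk
      obtain hk1 | hk1 := eq_or_lt_of_le (Nat.succ_le_of_lt hk)
      · rw [hcoW k hk1.le, ← hk1, hCm, Matrix.mul_assoc,
          Matrix.nonsing_inv_mul _ ((Matrix.isUnit_iff_isUnit_det _).mp (hlV (m + 1))),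
          Matrix.mul_one, sub_self]
      · rw [hcoW k (le_of_lt hk1),
          leadC_eq_zero_of_lt W hk1 hW, leadC_eq_zero_of_lt (V (m + 1)) hk1 (hdV (m + 1)),
          Matrix.mul_zero, sub_zero]
    obtain ⟨C, hC⟩ := ih W' hW'
    refine ⟨Function.update C (m + 1) Cm, ?_⟩
    rw [Finset.sum_range_succ, Function.update_self]
    have hsum : ∑ n ∈ Finset.range (m + 1), cM (Function.update C (m + 1) Cm n) * V n
        = ∑ n ∈ Finset.range (m + 1), cM (C n) * V n := by
      apply Finset.sum_congr rfl
      intro n hn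
      rw [Function.update_of_ne (Nat.ne_of_lt (Finset.mem_range.mp hn))]
    rw [hsum, ← hC, hW'def, sub_add_cancel]

/-- Right expansion. -/
lemma expandRight (Gt : ℕ → MatPoly N) (hdG : ∀ n, ∀ i j, ((Gt n) i j).natDegree ≤ n)
    (hlG : ∀ n, IsUnit (leadC (Gt n) n)) :
    ∀ (m : ℕ) (W : MatPoly N), (∀ i j, (W i j).natDegree ≤ m) →
      ∃ D : ℕ → Matrix (Fin N) (Fin N) ℂ,
        W = ∑ n ∈ Finset.range (m + 1), Gt n * cM (D n) := by
  intro m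
  induction m with
  | zero =>
    intro W hW
    refine ⟨fun _ => (leadC (Gt 0) 0)⁻¹ * leadC W 0, ?_⟩
    have hC : leadC (Gt 0) 0 * ((leadC (Gt 0) 0)⁻¹ * leadC W 0) = leadC W 0 := by
      rw [← Matrix.mul_assoc,
        Matrix.mul_nonsing_inv _ ((Matrix.isUnit_iff_isUnit_det _).mp (hlG 0)),
        Matrix.one_mul]
    rw [Finset.sum_range_one]
    calc W = cM (leadC W 0) := (cM_of_deg0 W hW).symm
      _ = cM (leadC (Gt 0) 0 * ((leadC (Gt 0) 0)⁻¹ * leadC W 0)) := by rw [hC]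
      _ = cM (leadC (Gt 0) 0) * cM ((leadC (Gt 0) 0)⁻¹ * leadC W 0) := cM_mul _ _
      _ = Gt 0 * cM ((leadC (Gt 0) 0)⁻¹ * leadC W 0) := by rw [cM_of_deg0 (Gt 0) (hdG 0)]
  | succ m ih =>
    intro W hW
    set Dm := (leadC (Gt (m + 1)) (m + 1))⁻¹ * leadC W (m + 1) with hDm
    set W' := W - Gt (m + 1) * cM Dm with hW'def
    have hcoW : ∀ k, m + 1 ≤ k → leadC W' k = leadC W k - leadC (Gt (m + 1)) k * Dm := by
      intro k _
      rw [hW'def, leadC_sub, leadC_mul_cM]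
    have hW' : ∀ i j, (W' i j).natDegree ≤ m := by
      apply natDegree_le_of_leadC
      intro k hk
      obtain hk1 | hk1 := eq_or_lt_of_le (Nat.succ_le_of_lt hk)
      · rw [hcoW k hk1.le, ← hk1, hDm, ← Matrix.mul_assoc,
          Matrix.mul_nonsing_inv _ ((Matrix.isUnit_iff_isUnit_det _).mp (hlG (m + 1))),
          Matrix.one_mul, sub_self]
      · rw [hcoW k (le_of_lt hk1),
          leadC_eq_zero_of_lt W hk1 hW, leadC_eq_zero_of_lt (Gt (m + 1)) hk1 (hdG (m + 1)),
          Matrix.zero_mul, sub_zero]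
    obtain ⟨D, hD⟩ := ih W' hW'
    refine ⟨Function.update D (m + 1) Dm, ?_⟩
    rw [Finset.sum_range_succ, Function.update_self]
    have hsum : ∑ n ∈ Finset.range (m + 1), Gt n * cM (Function.update D (m + 1) Dm n)
        = ∑ n ∈ Finset.range (m + 1), Gt n * cM (D n) := by
      apply Finset.sum_congr rfl
      intro n hn
      rw [Function.update_of_ne (Nat.ne_of_lt (Finset.mem_range.mp hn))]
    rw [hsum, ← hD, hW'def, sub_add_cancel]


section Delta

variable {N M : ℕ} (c : Fin M → ℂ) (Mu : Fin M → ℕ)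
  (e : Fin N ≃ (Σ j : Fin M, Fin (Mu j + 1)))
  (h : Polynomial ℂ)

lemma deltaVec_h_mul (hh : h = ∏ j, (Polynomial.X - Polynomial.C (c j)) ^ (Mu j + 1))
    (t : Fin N) (q : Polynomial ℂ) : deltaVec c Mu e t (h * q) = 0 := by
  unfold deltaVec
  apply dd_of_dvd
  apply dvd_mul_of_dvd_left
  rw [hh]
  exact dvd_trans
    (pow_dvd_pow _ (Nat.succ_le_succ (Nat.lt_succ_iff.mp (e t).2.isLt)))
    (Finset.dvd_prod_of_mem _ (Finset.mem_univ (e t).1))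

lemma deltaVec_comp_mul (hh : h = ∏ j, (Polynomial.X - Polynomial.C (c j)) ^ (Mu j + 1))
    (t : Fin N) (p q : Polynomial ℂ) :
    deltaVec c Mu e t (p.comp h * q) = p.eval 0 * deltaVec c Mu e t q := by
  have key : p.comp h = Polynomial.C (p.eval 0) + h * ((p.divX).comp h) := by
    conv_lhs => rw [← Polynomial.X_mul_divX_add p]
    rw [Polynomial.add_comp, Polynomial.mul_comp, Polynomial.X_comp, Polynomial.C_comp,
      Polynomial.coeff_zero_eq_eval_zero]
    ring
  rw [key, add_mul, map_add, mul_assoc, deltaVec_h_mul c Mu e h hh, add_zero,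
    ← Polynomial.smul_eq_C_mul, _root_.map_smul, smul_eq_mul]

lemma deltaMat_Bvec (hh : h = ∏ j, (Polynomial.X - Polynomial.C (c j)) ^ (Mu j + 1))
    (W : MatPoly N) :
    deltaMat c Mu e (Bvec W h) = evalM W 0 * deltaMat c Mu e (P0 N) := by
  ext r t
  simp only [deltaMat, Matrix.of_apply, Bvec, Matrix.mulVec, dotProduct, compH,
    Matrix.map_apply, Matrix.mul_apply, evalM]
  rw [map_sum]
  exact Finset.sum_congr rfl fun s _ => deltaVec_comp_mul c Mu e h hh t _ _

end Delta

section TransApply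

variable {N : ℕ} (U : Fin N → (Polynomial ℂ →ₗ[ℂ] ℂ))

lemma transApply_sumP {α : Type*} (Q : MatPoly N) (s : Finset α)
    (P : α → Fin N → Polynomial ℂ) :
    transApply U Q (fun i => ∑ n ∈ s, P n i) = ∑ n ∈ s, transApply U Q (P n) := by
  ext i j
  simp only [transApply, Matrix.of_apply, Finset.mul_sum, map_sum, Matrix.sum_apply]
  exact Finset.sum_comm

lemma transApply_cM_mulVec (Q : MatPoly N) (A : Matrix (Fin N) (Fin N) ℂ)
    (P : Fin N → Polynomial ℂ) :
    transApply U Q ((cM A).mulVec P) = A * transApply U Q P := by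
  ext i j
  simp only [transApply, Matrix.of_apply, Matrix.mulVec, dotProduct, cM,
    Matrix.map_apply, Matrix.mul_apply, Finset.mul_sum, map_sum]
  rw [Finset.sum_comm]
  refine Finset.sum_congr rfl fun t _ => ?_
  refine Finset.sum_congr rfl fun s _ => ?_
  rw [mul_left_comm, ← Polynomial.smul_eq_C_mul, _root_.map_smul, smul_eq_mul]

lemma transApply_sumQ {α : Type*} (s : Finset α) (Q : α → MatPoly N)
    (P : Fin N → Polynomial ℂ) :
    transApply U (∑ n ∈ s, Q n) P = ∑ n ∈ s, transApply U (Q n) P := by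
  ext i j
  simp only [transApply, Matrix.of_apply, Matrix.sum_apply, Finset.sum_mul, map_sum]
  exact Finset.sum_comm

lemma transApply_mul_cM (Q : MatPoly N) (A : Matrix (Fin N) (Fin N) ℂ)
    (P : Fin N → Polynomial ℂ) :
    transApply U (Q * cM A) P = transApply U Q P * A := by
  ext i j
  simp only [transApply, Matrix.of_apply, Matrix.mul_apply, cM, Matrix.map_apply,
    Finset.sum_mul, map_sum]
  rw [Finset.sum_comm]
  refine Finset.sum_congr rfl fun r _ => ?_
  refine Finset.sum_congr rfl fun s _ => ?_
  rw [mul_comm (Q s r) (Polynomial.C (A r j)), mul_assoc, ← Polynomial.smul_eq_C_mul,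
    _root_.map_smul, smul_eq_mul, mul_comm]

lemma sum_mulVec' {α R : Type*} [NonUnitalNonAssocSemiring R] (s : Finset α)
    (A : α → Matrix (Fin N) (Fin N) R) (v : Fin N → R) :
    ((∑ n ∈ s, A n) *ᵥ v) = ∑ n ∈ s, (A n *ᵥ v) := by
  funext i
  simp only [Matrix.mulVec, dotProduct, Matrix.sum_apply, Finset.sum_mul,
    Finset.sum_apply]
  exact Finset.sum_comm

lemma Bvec_sum (h : Polynomial ℂ) {α : Type*} (s : Finset α)
    (C : α → Matrix (Fin N) (Fin N) ℂ) (V : α → MatPoly N) :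
    Bvec (∑ n ∈ s, cM (C n) * V n) h
      = fun i => ∑ n ∈ s, ((cM (C n)).mulVec (Bvec (V n) h)) i := by
  unfold Bvec
  rw [compH_sum,
    show (∑ n ∈ s, compH (cM (C n) * V n) h) = ∑ n ∈ s, cM (C n) * compH (V n) h from
      Finset.sum_congr rfl (fun n _ => by rw [compH_mul, compH_cM]),
    sum_mulVec']
  funext i
  rw [Finset.sum_apply]
  refine Finset.sum_congr rfl fun n _ => ?_
  rw [← Matrix.mulVec_mulVec]

lemma transApply_Bvec_expand (Q : MatPoly N) (h : Polynomial ℂ) {α : Type*}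
    (s : Finset α) (C : α → Matrix (Fin N) (Fin N) ℂ) (V : α → MatPoly N) :
    transApply U Q (Bvec (∑ n ∈ s, cM (C n) * V n) h)
      = ∑ n ∈ s, C n * transApply U Q (Bvec (V n) h) := by
  rw [Bvec_sum, transApply_sumP]
  exact Finset.sum_congr rfl fun n _ => transApply_cM_mulVec U Q (C n) _

lemma transApply_compH_expand (h : Polynomial ℂ) {α : Type*}
    (s : Finset α) (D : α → Matrix (Fin N) (Fin N) ℂ) (Gf : α → MatPoly N)
    (P : Fin N → Polynomial ℂ) :
    transApply U (compH (∑ n ∈ s, Gf n * cM (D n)) h) P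
      = ∑ n ∈ s, transApply U (compH (Gf n) h) P * D n := by
  rw [compH_sum, transApply_sumQ]
  refine Finset.sum_congr rfl fun n _ => ?_
  rw [compH_mul, compH_cM, transApply_mul_cM]

end TransApply


section Utf

variable {N M : ℕ} (U : Fin N → (Polynomial ℂ →ₗ[ℂ] ℂ)) (Λ : Matrix (Fin N) (Fin N) ℂ)
  (c : Fin M → ℂ) (Mu : Fin M → ℕ) (e : Fin N ≃ (Σ j : Fin M, Fin (Mu j + 1)))
  (h : Polynomial ℂ)

lemma transApply_Utf (hh : h = ∏ j, (Polynomial.X - Polynomial.C (c j)) ^ (Mu j + 1))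
    (Gn W : MatPoly N) :
    transApply (Utf U Λ c Mu e) (compH Gn h) (Bvec W h)
      = transApply U (compH Gn h) (Bvec W h)
        + evalM W 0 * deltaMat c Mu e (P0 N) * Λ.transpose * evalM Gn 0 := by
  ext i j
  simp only [transApply, Matrix.of_apply, Utf, LinearMap.add_apply, Matrix.add_apply]
  rw [Finset.sum_add_distrib]
  congr 1
  have hδ : ∀ s : Fin N, (∑ t, Λ s t • deltaVec c Mu e t) ((compH Gn h) s j * Bvec W h i)
      = ∑ t, Λ s t * ((evalM Gn 0) s j * ((evalM W 0 * deltaMat c Mu e (P0 N)) i t)) := by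
    intro s
    rw [LinearMap.sum_apply]
    refine Finset.sum_congr rfl fun t _ => ?_
    rw [LinearMap.smul_apply, smul_eq_mul]
    congr 1
    have h1 : (compH Gn h) s j = (Gn s j).comp h := rfl
    rw [h1, deltaVec_comp_mul c Mu e h hh]
    have h2 : deltaVec c Mu e t (Bvec W h i)
        = (evalM W 0 * deltaMat c Mu e (P0 N)) i t := by
      have := congrFun (congrFun (deltaMat_Bvec c Mu e h hh W) i) t
      simpa [deltaMat] using this
    rw [h2]
    rfl
  rw [Finset.sum_congr rfl fun s _ => hδ s]
  rw [show (evalM W 0 * deltaMat c Mu e (P0 N) * Λ.transpose * evalM Gn 0) i j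
      = ∑ s, (∑ t, (evalM W 0 * deltaMat c Mu e (P0 N)) i t * Λ s t) * (evalM Gn 0) s j from by
    simp [Matrix.mul_apply, Matrix.transpose_apply]]
  refine Finset.sum_congr rfl fun s _ => ?_
  rw [Finset.sum_mul]
  exact Finset.sum_congr rfl fun t _ => by ring

end Utf

end MPAux
/-- **Leading-coefficient identity for the Dirac-modified polynomials**:
`((β_m^m)⁻¹ β̃_m^m)(α̃_m^m (α_m^m)⁻¹)
  = I - V_m(0) (I + δ(P₀) Λᵀ K_{m+1}(c_l,c_l))⁻¹ δ(P₀) Λᵀ G_m(0)`. -/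
theorem modified_polynomials_leading_coefficient_identity
    (N M : ℕ) (hN : 1 ≤ N)
    (c : Fin M → ℂ) (hc : Function.Injective c) (Mu : Fin M → ℕ)
    (h : Polynomial ℂ)
    (hh : h = ∏ j, (Polynomial.X - Polynomial.C (c j)) ^ (Mu j + 1))
    (hdeg : h.natDegree = N)
    (e : Fin N ≃ (Σ j : Fin M, Fin (Mu j + 1)))
    (U : Fin N → (Polynomial ℂ →ₗ[ℂ] ℂ))
    (Λ : Matrix (Fin N) (Fin N) ℂ)
    -- the bi-orthogonal pair for `U`
    (V G : ℕ → MatPoly N)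
    (hV0I : V 0 = 1)
    (hdV : ∀ m, ∀ i j, ((V m) i j).natDegree ≤ m)
    (hlV : ∀ m, IsUnit (leadC (V m) m))
    (hdG : ∀ m, ∀ i j, ((G m) i j).natDegree ≤ m)
    (hlG : ∀ m, IsUnit (leadC (G m) m))
    (hleft : ∀ m, ∀ k < m, applyU U (fun i => h ^ k * Bvec (V m) h i) = 0)
    (hleftn : ∀ m, IsUnit (applyU U fun i => h ^ m * Bvec (V m) h i))
    (hright : ∀ m, ∀ j < m,
      transApply U (compH (G m) h) (fun i => h ^ j * P0 N i) = 0)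
    (hrightn : ∀ m, IsUnit (transApply U (compH (G m) h) fun i => h ^ m * P0 N i))
    (hbi : ∀ n m, transApply U (compH (G n) h) (Bvec (V m) h) =
      if n = m then 1 else 0)
    -- the bi-orthogonal pair for `Ũ = U + Λδ`
    (Vt Gt : ℕ → MatPoly N)
    (hdVt : ∀ m, ∀ i j, ((Vt m) i j).natDegree ≤ m)
    (hlVt : ∀ m, IsUnit (leadC (Vt m) m))
    (hdGt : ∀ m, ∀ i j, ((Gt m) i j).natDegree ≤ m)
    (hlGt : ∀ m, IsUnit (leadC (Gt m) m))
    (hleftt : ∀ m, ∀ k < m,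
      applyU (Utf U Λ c Mu e) (fun i => h ^ k * Bvec (Vt m) h i) = 0)
    (hlefttn : ∀ m, IsUnit (applyU (Utf U Λ c Mu e) fun i => h ^ m * Bvec (Vt m) h i))
    (hrightt : ∀ m, ∀ j < m,
      transApply (Utf U Λ c Mu e) (compH (Gt m) h) (fun i => h ^ j * P0 N i) = 0)
    (hrighttn : ∀ m,
      IsUnit (transApply (Utf U Λ c Mu e) (compH (Gt m) h) fun i => h ^ m * P0 N i))
    (hbit : ∀ n m, transApply (Utf U Λ c Mu e) (compH (Gt n) h) (Bvec (Vt m) h) =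
      if n = m then 1 else 0)
    -- the matrices `I + δ(P₀) Λᵀ K_{m+1}(c_l,c_l)` are nonsingular (a consequence of the
    -- quasi-definiteness of `Ũ`)
    (hK : ∀ m : ℕ, IsUnit ((1 : Matrix (Fin N) (Fin N) ℂ) +
      deltaMat c Mu e (P0 N) * Λ.transpose * Kzero V G m)) :
    ∀ m : ℕ,
      ((leadC (G m) m)⁻¹ * leadC (Gt m) m) * (leadC (Vt m) m * (leadC (V m) m)⁻¹) =
        (1 : Matrix (Fin N) (Fin N) ℂ)
          - evalM (V m) 0 *
              ((1 : Matrix (Fin N) (Fin N) ℂ) +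
                deltaMat c Mu e (P0 N) * Λ.transpose * Kzero V G m)⁻¹ *
              deltaMat c Mu e (P0 N) * Λ.transpose * evalM (G m) 0 := by
  intro m
  classical
  set δ0 := deltaMat c Mu e (P0 N) with hδ0
  set Xm := (1 : Matrix (Fin N) (Fin N) ℂ) + δ0 * Λ.transpose * Kzero V G m with hXm
  have hXdet : IsUnit Xm.det := (Matrix.isUnit_iff_isUnit_det _).mp (hK m)
  -- expansion of `Vt m` in the basis `{V n}`
  obtain ⟨Cf, hCf⟩ := MPAux.expandLeft V hdV hlV m (Vt m) (hdVt m)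
  -- expansions of the `G n` in the basis `{Gt k}`
  have hexp : ∀ n : ℕ, ∃ D : ℕ → Matrix (Fin N) (Fin N) ℂ,
      G n = ∑ k ∈ Finset.range (n + 1), Gt k * MPAux.cM (D k) :=
    fun n => MPAux.expandRight Gt hdGt hlGt n (G n) (hdG n)
  choose Df hDf using hexp
  -- the pairing computes the expansion coefficients
  have hCval : ∀ n ∈ Finset.range (m + 1),
      transApply U (compH (G n) h) (Bvec (Vt m) h) = Cf n := by
    intro n hn
    rw [hCf, MPAux.transApply_Bvec_expand,
      Finset.sum_congr rfl (fun k _ => by rw [hbi n k])]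
    rw [Finset.sum_eq_single n (fun k _ hk => by rw [if_neg (Ne.symm hk), mul_zero])
      (fun hn' => absurd hn hn')]
    rw [if_pos rfl, mul_one]
  -- the `Ũ`-pairing
  have hUt : ∀ n : ℕ, transApply (Utf U Λ c Mu e) (compH (G n) h) (Bvec (Vt m) h)
      = ∑ k ∈ Finset.range (n + 1), (if k = m then (1 : Matrix (Fin N) (Fin N) ℂ) else 0)
          * Df n k := by
    intro n
    conv_lhs => rw [hDf n]
    rw [MPAux.transApply_compH_expand]
    exact Finset.sum_congr rfl fun k _ => by rw [hbit k m]
  have hUtlt : ∀ n < m, transApply (Utf U Λ c Mu e) (compH (G n) h) (Bvec (Vt m) h) = 0 := by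
    intro n hnm
    rw [hUt n]
    apply Finset.sum_eq_zero
    intro k hk
    have hkm : k ≠ m := by
      have := Finset.mem_range.mp hk; omega
    rw [if_neg hkm, Matrix.zero_mul]
  have hUtm : transApply (Utf U Λ c Mu e) (compH (G m) h) (Bvec (Vt m) h) = Df m m := by
    rw [hUt m]
    rw [Finset.sum_eq_single m (fun k _ hk => by rw [if_neg hk, Matrix.zero_mul])
      (fun hm' => absurd (Finset.self_mem_range_succ m) hm')]
    rw [if_pos rfl, Matrix.one_mul]
  -- combination: value of the `U`-pairing
  have hcomb : ∀ n : ℕ, transApply U (compH (G n) h) (Bvec (Vt m) h)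
      = transApply (Utf U Λ c Mu e) (compH (G n) h) (Bvec (Vt m) h)
        - evalM (Vt m) 0 * δ0 * Λ.transpose * evalM (G n) 0 := by
    intro n
    rw [MPAux.transApply_Utf U Λ c Mu e h hh (G n) (Vt m), hδ0]
    abel
  have hCval' : ∀ n ∈ Finset.range (m + 1),
      Cf n = (if n = m then Df m m else 0) - evalM (Vt m) 0 * δ0 * Λ.transpose * evalM (G n) 0 := by
    intro n hn
    rw [← hCval n hn, hcomb n]
    congr 1
    by_cases hnm : n = m
    · rw [if_pos hnm, hnm, hUtm]
    · rw [if_neg hnm,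
        hUtlt n (lt_of_le_of_ne (Nat.lt_succ_iff.mp (Finset.mem_range.mp hn)) hnm)]
  -- evaluation at zero of the expansion
  have hV0 : evalM (Vt m) 0 = ∑ n ∈ Finset.range (m + 1), Cf n * evalM (V n) 0 := by
    conv_lhs => rw [hCf]
    rw [MPAux.evalM_sum]
    exact Finset.sum_congr rfl fun n _ => by rw [MPAux.evalM_mul, MPAux.evalM_cM]
  -- solve for `Ṽ_m(0)`
  have hsum1 : ∑ n ∈ Finset.range (m + 1),
      (if n = m then Df m m else 0) * evalM (V n) 0 = Df m m * evalM (V m) 0 := by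
    rw [Finset.sum_eq_single m (fun k _ hk => by rw [if_neg hk, Matrix.zero_mul])
      (fun hm' => absurd (Finset.self_mem_range_succ m) hm')]
    rw [if_pos rfl]
  have hsum2 : ∑ n ∈ Finset.range (m + 1),
      evalM (Vt m) 0 * δ0 * Λ.transpose * evalM (G n) 0 * evalM (V n) 0
      = evalM (Vt m) 0 * δ0 * Λ.transpose * Kzero V G m := by
    rw [Kzero, Finset.mul_sum]
    exact Finset.sum_congr rfl fun n _ => by rw [Matrix.mul_assoc]
  have hV0' : evalM (Vt m) 0
      = Df m m * evalM (V m) 0 - evalM (Vt m) 0 * δ0 * Λ.transpose * Kzero V G m := by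
    calc evalM (Vt m) 0 = ∑ n ∈ Finset.range (m + 1), Cf n * evalM (V n) 0 := hV0
      _ = ∑ n ∈ Finset.range (m + 1),
          ((if n = m then Df m m else 0) * evalM (V n) 0
            - evalM (Vt m) 0 * δ0 * Λ.transpose * evalM (G n) 0 * evalM (V n) 0) :=
        Finset.sum_congr rfl fun n hn => by rw [hCval' n hn, Matrix.sub_mul]
      _ = Df m m * evalM (V m) 0
          - evalM (Vt m) 0 * δ0 * Λ.transpose * Kzero V G m := by
        rw [Finset.sum_sub_distrib, hsum1, hsum2]
  have hVX : evalM (Vt m) 0 * Xm = Df m m * evalM (V m) 0 := by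
    rw [hXm, Matrix.mul_add, Matrix.mul_one, ← Matrix.mul_assoc, ← Matrix.mul_assoc]
    exact eq_sub_iff_add_eq.mp hV0' 
  have hVt0 : evalM (Vt m) 0 = Df m m * evalM (V m) 0 * Xm⁻¹ := by
    rw [← hVX, Matrix.mul_assoc, Matrix.mul_nonsing_inv _ hXdet, Matrix.mul_one]
  -- leading coefficient relations
  have hαt : leadC (Vt m) m = Cf m * leadC (V m) m := by
    conv_lhs => rw [hCf]
    rw [MPAux.leadC_sum, Finset.sum_range_succ,
      Finset.sum_eq_zero (fun n hn => by
        rw [MPAux.leadC_cM_mul,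
          MPAux.leadC_eq_zero_of_lt (V n) (Finset.mem_range.mp hn) (hdV n),
          Matrix.mul_zero]),
      zero_add, MPAux.leadC_cM_mul]
  have hβ : leadC (G m) m = leadC (Gt m) m * Df m m := by
    conv_lhs => rw [hDf m]
    rw [MPAux.leadC_sum, Finset.sum_range_succ,
      Finset.sum_eq_zero (fun n hn => by
        rw [MPAux.leadC_mul_cM,
          MPAux.leadC_eq_zero_of_lt (Gt n) (Finset.mem_range.mp hn) (hdGt n),
          Matrix.zero_mul]),
      zero_add, MPAux.leadC_mul_cM]
  -- units
  have hβdet := (Matrix.isUnit_iff_isUnit_det _).mp (hlG m)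
  have hβtdet := (Matrix.isUnit_iff_isUnit_det _).mp (hlGt m)
  have hαdet := (Matrix.isUnit_iff_isUnit_det _).mp (hlV m)
  have hDdet : IsUnit (Df m m).det := by
    have h1 := hβdet
    rw [hβ, Matrix.det_mul] at h1
    exact isUnit_of_mul_isUnit_right h1
  -- final computation
  have hinv : (leadC (G m) m)⁻¹ = (Df m m)⁻¹ * (leadC (Gt m) m)⁻¹ := by
    rw [hβ, Matrix.mul_inv_rev]
  rw [hinv, hαt, Matrix.mul_assoc (Df m m)⁻¹, Matrix.nonsing_inv_mul _ hβtdet,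
    Matrix.mul_one, Matrix.mul_assoc (Cf m), Matrix.mul_nonsing_inv _ hαdet,
    Matrix.mul_one, hCval' m (Finset.self_mem_range_succ m), if_pos rfl, hVt0,
    Matrix.mul_sub]
  simp only [Matrix.mul_assoc]
  rw [Matrix.nonsing_inv_mul _ hDdet,
    ← Matrix.mul_assoc (Df m m)⁻¹ (Df m m), Matrix.nonsing_inv_mul _ hDdet,
    Matrix.one_mul]

end
end

section
/- Matrix interpretation of the Dirac-modified pairing: let U be a vector of linear functionals, h(x) = Π_{j=1}^{M} (x − c_j)^{M_j + 1} with deg h = N, Λ an N×N matrix, and Ũ = U + Λδ. Then for any N×N matrix polynomials Q and W, setting B̃(x) = W(h(x))·P_0(x): ( (Q(h(x)))^T Ũ )(B̃) = ( (Q(h(x)))^T U )(B̃) + W(0) · δ(P_0) · Λ^T · Q(0). -/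
open Polynomial Matrix Finset

noncomputable section

/-! Every component of `δ` is a derivative of order at most `Mu j` at a root `c j` of `h` of
multiplicity `Mu j + 1`, so it vanishes on multiples of `h`. Writing `f = f(0) + x·(f/x)` then shows
that `δ` sees `f(h(x))` only through `f(0)`, which turns the extra term `Λδ` of `Ũ` into
`W(0) δ(P₀) Λᵀ Q(0)`. -/

lemma dd_eq_zero_of_pow_dvd {a : ℂ} {n i : ℕ} (hi : i ≤ n) {p : ℂ[X]}
    (hp : (X - C a) ^ (n + 1) ∣ p) : dd a i p = 0 := by
  have hdvd : X - C a ∣ derivative^[i] p :=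
    (dvd_pow_self _ (by omega)).trans (pow_sub_dvd_iterate_derivative_of_pow_dvd i hp)
  simpa [dd, Module.End.pow_apply] using dvd_iff_isRoot.mp hdvd

section DiracDelta

variable {N M : ℕ} (c : Fin M → ℂ) (Mu : Fin M → ℕ) (e : Fin N ≃ (Σ j : Fin M, Fin (Mu j + 1)))

lemma deltaVec_eq_zero_of_dvd {p : ℂ[X]} (hp : (∏ j, (X - C (c j)) ^ (Mu j + 1)) ∣ p)
    (t : Fin N) : deltaVec c Mu e t p = 0 :=
  dd_eq_zero_of_pow_dvd (e t).2.is_le <|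
    (Finset.dvd_prod_of_mem (fun j => (X - C (c j)) ^ (Mu j + 1)) (mem_univ _)).trans hp

variable {c Mu} {h : ℂ[X]} (hh : h = ∏ j, (X - C (c j)) ^ (Mu j + 1))
include hh

lemma deltaVec_comp_mul (t : Fin N) (f g : ℂ[X]) :
    deltaVec c Mu e t (f.comp h * g) = f.eval 0 * deltaVec c Mu e t g := by
  have hvanish : deltaVec c Mu e t (h * ((divX f).comp h * g)) = 0 :=
    deltaVec_eq_zero_of_dvd c Mu e (hh ▸ dvd_mul_right _ _) t
  conv_lhs => rw [← X_mul_divX_add f]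
  rw [add_comp, mul_comp, X_comp, C_comp, add_mul, mul_assoc, map_add, hvanish, zero_add,
    ← smul_eq_C_mul, map_smul, smul_eq_mul, coeff_zero_eq_eval_zero]

lemma deltaVec_Bvec (W : MatPoly N) (i t : Fin N) :
    deltaVec c Mu e t (Bvec W h i) = (evalM W 0 * deltaMat c Mu e (P0 N)) i t := by
  simp only [Bvec, mulVec, dotProduct, map_sum, compH, map_apply, mul_apply, evalM, deltaMat,
    of_apply]
  exact sum_congr rfl fun k _ => by simpa using deltaVec_comp_mul e hh t (W i k) (P0 N k)

lemma transApply_sum_smul_deltaVec (Λ : Matrix (Fin N) (Fin N) ℂ) (Q W : MatPoly N) :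
    transApply (fun j => ∑ t, Λ j t • deltaVec c Mu e t) (compH Q h) (Bvec W h) =
      evalM W 0 * deltaMat c Mu e (P0 N) * Λᵀ * evalM Q 0 := by
  ext i j
  simp only [transApply, of_apply, LinearMap.sum_apply, LinearMap.smul_apply,
    smul_eq_mul, compH, map_apply, deltaVec_comp_mul e hh, deltaVec_Bvec e hh, mul_apply,
    transpose_apply, evalM, sum_mul, mul_sum]
  exact sum_congr rfl fun s _ => sum_congr rfl fun t _ => sum_congr rfl fun k _ => by ring

end DiracDelta

lemma transApply_add {N : ℕ} (U V : Fin N → (ℂ[X] →ₗ[ℂ] ℂ)) (Q : MatPoly N)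
    (P : Fin N → ℂ[X]) : transApply (U + V) Q P = transApply U Q P + transApply V Q P := by
  ext i j
  simp [transApply, sum_add_distrib]

theorem dirac_modified_pairing_general
    (N M : ℕ)
    (c : Fin M → ℂ) (Mu : Fin M → ℕ)
    (h : Polynomial ℂ)
    (hh : h = ∏ j, (Polynomial.X - Polynomial.C (c j)) ^ (Mu j + 1))
    (e : Fin N ≃ (Σ j : Fin M, Fin (Mu j + 1)))
    (U : Fin N → (Polynomial ℂ →ₗ[ℂ] ℂ))
    (Λ : Matrix (Fin N) (Fin N) ℂ)
    (Q W : MatPoly N) :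
    transApply (Utf U Λ c Mu e) (compH Q h) (Bvec W h) =
      transApply U (compH Q h) (Bvec W h)
        + evalM W 0 * deltaMat c Mu e (P0 N) * Λ.transpose * evalM Q 0 := by
  have hsplit : Utf U Λ c Mu e = U + fun j => ∑ t, Λ j t • deltaVec c Mu e t := rfl
  rw [hsplit, transApply_add, transApply_sum_smul_deltaVec e hh]

/-- **Matrix interpretation of the Dirac-modified pairing**: for any matrix polynomials
`Q`, `W` and `B̃(x) = W(h(x)) P₀(x)`,
`((Q(h(x)))ᵀ Ũ)(B̃) = ((Q(h(x)))ᵀ U)(B̃) + W(0) δ(P₀) Λᵀ Q(0)`. -/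
theorem dirac_modified_pairing
    (N M : ℕ) (hN : 1 ≤ N)
    (c : Fin M → ℂ) (hc : Function.Injective c) (Mu : Fin M → ℕ)
    (h : Polynomial ℂ)
    (hh : h = ∏ j, (Polynomial.X - Polynomial.C (c j)) ^ (Mu j + 1))
    (hdeg : h.natDegree = N)
    (e : Fin N ≃ (Σ j : Fin M, Fin (Mu j + 1)))
    (U : Fin N → (Polynomial ℂ →ₗ[ℂ] ℂ))
    (Λ : Matrix (Fin N) (Fin N) ℂ)
    (Q W : MatPoly N) :
    transApply (Utf U Λ c Mu e) (compH Q h) (Bvec W h) =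
      transApply U (compH Q h) (Bvec W h)
        + evalM W 0 * deltaMat c Mu e (P0 N) * Λ.transpose * evalM Q 0 :=
  dirac_modified_pairing_general N M c Mu h hh e U Λ Q W

end
end
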